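/- arXiv:2103.03276 — 3 statements merged into one kernel-verified Lean document; each statement's English description precedes it below -/
import Mathlib

section
/- Let F be a real polynomial of degree n ≥ 1 with positive leading coefficient aₙ, increasing on [C, ∞), with inverse function F⁻¹ : [F(C), ∞) → [C, ∞). Then lim_{x→∞} [(x/aₙ)^{1/n} − F⁻¹(x)] = aₙ₋₁/(n·aₙ), where aₙ₋₁ is the coefficient of Xⁿ⁻¹ in F. -/
/-!
Write `a` for the leading coefficient and `r(t) = F(t) / (a tⁿ)`, so that
`(F(t)/a)^(1/n) - t = t (r(t)^(1/n) - 1)`. Comparing `F` and `F - a Xⁿ` with `tⁿ` and `tⁿ⁻¹` gives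
`r(t) → 1` and `t (r(t) - 1) → aₙ₋₁/a`; since `v ↦ v^(1/n)` has derivative `1/n` at `1`, the
product tends to `aₙ₋₁/(n a)`. Finally `F⁻¹(x) → ∞` because `F` is bounded on compact intervals,
and substituting `t = F⁻¹(x)` gives the theorem.
-/

open Polynomial Filter Topology Asymptotics

theorem Polynomial.tendsto_eval_div_pow_of_natDegree_le {𝕜 : Type*} [NormedField 𝕜]
    [LinearOrder 𝕜] [IsStrictOrderedRing 𝕜] [OrderTopology 𝕜] {P : 𝕜[X]} {m : ℕ}
    (hm : P.natDegree ≤ m) :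
    Tendsto (fun t => P.eval t / t ^ m) atTop (𝓝 (P.coeff m)) := by
  rcases (degree_le_of_natDegree_le hm).lt_or_eq with hlt | heq
  · rw [coeff_eq_zero_of_degree_lt hlt]
    simpa using div_tendsto_atTop_zero_of_degree_lt P (X ^ m) (by rwa [degree_X_pow])
  · have hcoeff : P.coeff m = P.leadingCoeff := by
      rw [leadingCoeff, natDegree_eq_of_degree_eq_some heq]
    simpa [hcoeff] using
      div_tendsto_atTop_leadingCoeff_div_of_degree_eq P (X ^ m) (by rwa [degree_X_pow])

theorem HasDerivAt.tendsto_mul_sub_comp {𝕜 α : Type*} [NontriviallyNormedField 𝕜] {l : Filter α}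
    {f : 𝕜 → 𝕜} {f' y L : 𝕜} {r s : α → 𝕜} (hf : HasDerivAt f f' y)
    (hr : Tendsto r l (𝓝 y)) (hs : Tendsto (fun x => s x * (r x - y)) l (𝓝 L)) :
    Tendsto (fun x => s x * (f (r x) - f y)) l (𝓝 (L * f')) := by
  have hrem : (fun x => s x * (f (r x) - f y - (r x - y) • f')) =o[l]
      fun x => s x * (r x - y) :=
    (isBigO_refl s l).mul_isLittleO (hf.isLittleO.comp_tendsto hr)
  have hsum := (hs.mul_const f').add
    ((isLittleO_one_iff 𝕜).1 (hrem.trans_isBigO (hs.isBigO_one 𝕜)))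
  rw [add_zero] at hsum
  refine hsum.congr fun x => ?_
  simp only [smul_eq_mul]
  ring

theorem tendsto_atTop_of_continuous_comp {α : Type*} {l : Filter α} {f : ℝ → ℝ} {g : α → ℝ}
    {C : ℝ} (hf : Continuous f) (hg : ∀ᶠ x in l, C ≤ g x) (hfg : Tendsto (f ∘ g) l atTop) :
    Tendsto g l atTop := by
  refine tendsto_atTop.2 fun M => ?_
  obtain ⟨B, hB⟩ := (isCompact_Icc (a := C) (b := M)).bddAbove_image hf.continuousOn
  filter_upwards [hg, hfg.eventually_gt_atTop B] with x hCx hBx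
  by_contra! hxM
  exact hBx.not_ge (hB ⟨g x, ⟨hCx, hxM.le⟩, rfl⟩)

theorem Polynomial.tendsto_rpow_eval_div_leadingCoeff_sub_self (F : ℝ[X]) (hF : 0 < F.natDegree) :
    Tendsto (fun t => (F.eval t / F.leadingCoeff) ^ ((F.natDegree : ℝ)⁻¹) - t) atTop
      (𝓝 (F.coeff (F.natDegree - 1) / (F.natDegree * F.leadingCoeff))) := by
  have ha : F.leadingCoeff ≠ 0 := leadingCoeff_ne_zero.2 (ne_zero_of_natDegree_gt hF)
  set r : ℝ → ℝ := fun t => F.eval t / t ^ F.natDegree / F.leadingCoeff with hr_def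
  have hr : Tendsto r atTop (𝓝 1) := by
    have := (tendsto_eval_div_pow_of_natDegree_le (P := F) le_rfl).div_const F.leadingCoeff
    rwa [coeff_natDegree, div_self ha] at this
  have hs : Tendsto (fun t => t * (r t - 1)) atTop
      (𝓝 (F.coeff (F.natDegree - 1) / F.leadingCoeff)) := by
    have hlow := (tendsto_eval_div_pow_of_natDegree_le (eraseLead_natDegree_le F)).div_const
      F.leadingCoeff
    rw [eraseLead_coeff_of_ne _ (by omega)] at hlow
    refine hlow.congr' ?_
    filter_upwards [eventually_gt_atTop 0] with t ht
    simp only [hr_def, ← self_sub_C_mul_X_pow, eval_sub, eval_mul, eval_C, eval_pow, eval_X]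
    rw [← pow_sub_one_mul hF.ne' t]
    field_simp
  have hroot : HasDerivAt (fun v : ℝ => v ^ (F.natDegree : ℝ)⁻¹) (F.natDegree : ℝ)⁻¹ 1 := by
    simpa using
      Real.hasDerivAt_rpow_const (x := 1) (p := (F.natDegree : ℝ)⁻¹) (Or.inl one_ne_zero)
  have hlim := hroot.tendsto_mul_sub_comp hr hs
  rw [show F.coeff (F.natDegree - 1) / F.leadingCoeff * (F.natDegree : ℝ)⁻¹ =
    F.coeff (F.natDegree - 1) / (F.natDegree * F.leadingCoeff) by ring] at hlim
  refine hlim.congr' ?_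
  filter_upwards [eventually_gt_atTop 0, hr.eventually (eventually_gt_nhds one_pos)]
    with t ht hrt
  have hFa : F.eval t / F.leadingCoeff = r t * t ^ F.natDegree := by
    simp only [hr_def]; field_simp
  rw [hFa, Real.mul_rpow hrt.le (by positivity), Real.pow_rpow_inv_natCast ht.le hF.ne',
    Real.one_rpow]
  ring

theorem inverse_poly_asymptotics_general (F : Polynomial ℝ) (n : ℕ) (hn : 1 ≤ n)
    (hdeg : F.natDegree = n) (C : ℝ) (Finv : ℝ → ℝ)
    (hright : ∀ y ∈ Set.Ici (F.eval C), Finv y ∈ Set.Ici C ∧ F.eval (Finv y) = y) :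
    Tendsto (fun x : ℝ => (x / F.leadingCoeff) ^ ((n : ℝ)⁻¹) - Finv x) atTop
      (nhds (F.coeff (n - 1) / (n * F.leadingCoeff))) := by
  subst hdeg
  have hinv : ∀ᶠ y in atTop, C ≤ Finv y ∧ F.eval (Finv y) = y :=
    (eventually_ge_atTop (F.eval C)).mono hright
  have hFinv : Tendsto Finv atTop atTop :=
    tendsto_atTop_of_continuous_comp F.continuous (hinv.mono fun _ => And.left)
      (tendsto_id.congr' (hinv.mono fun _ h => h.2.symm))
  refine ((F.tendsto_rpow_eval_div_leadingCoeff_sub_self hn).comp hFinv).congr' ?_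
  filter_upwards [hinv] with y hy
  simp [hy.2]

/-- If `F` is a real polynomial of degree `n ≥ 1` with positive leading coefficient `aₙ`,
increasing on `[C, ∞)` with inverse `Finv` there, then
`(x / aₙ)^(1/n) - Finv x → aₙ₋₁ / (n * aₙ)` as `x → ∞`. -/
theorem inverse_poly_asymptotics (F : Polynomial ℝ) (n : ℕ) (hn : 1 ≤ n)
    (hdeg : F.natDegree = n) (hpos : 0 < F.leadingCoeff)
    (C : ℝ) (hmono : StrictMonoOn F.eval (Set.Ici C))
    (Finv : ℝ → ℝ)
    (hleft : ∀ x ∈ Set.Ici C, Finv (F.eval x) = x)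
    (hright : ∀ y ∈ Set.Ici (F.eval C), Finv y ∈ Set.Ici C ∧ F.eval (Finv y) = y) :
    Tendsto (fun x : ℝ => (x / F.leadingCoeff) ^ ((n : ℝ)⁻¹) - Finv x) atTop
      (nhds (F.coeff (n - 1) / (n * F.leadingCoeff))) :=
  inverse_poly_asymptotics_general F n hn hdeg C Finv hright
end

section
/- Let F be a real polynomial of degree n ≥ 1 with positive leading coefficient aₙ, strictly increasing on [C, ∞) with inverse F⁻¹, and let G(x) = bₘxᵐ + ... + b₀ be a real polynomial of degree m ≥ 1. Then (bₘ/aₙ^{m/n})·x^{m/n} − G(F⁻¹(x)) = o(x^{m/n}) as x → ∞. -/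
open Polynomial Filter Set
open scoped Topology

/-!
Put `y = F⁻¹(x)`, so that `x = F(y)` and `y → ∞` as `x → ∞`. The quotient becomes
`bₘ / aₙ^(m/n) - G(y) / F(y)^(m/n)`, and since `F(y)^(m/n) = (F(y)/yⁿ)^(m/n) · yᵐ`,
`G(y) / F(y)^(m/n) = (G(y)/yᵐ) / (F(y)/yⁿ)^(m/n) → bₘ / aₙ^(m/n)`.
-/

theorem tendsto_atTop_of_strictMonoOn_of_rightInverse {α β : Type*}
    [LinearOrder α] [LinearOrder β] {f : α → β} {g : β → α} {C : α}
    (hf : StrictMonoOn f (Ici C))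
    (hg : ∀ y ∈ Ici (f C), g y ∈ Ici C ∧ f (g y) = y) : Tendsto g atTop atTop := by
  refine tendsto_atTop.2 fun M => ?_
  filter_upwards [eventually_ge_atTop (f C), eventually_ge_atTop (f (max M C))] with y hyC hyM
  obtain ⟨hgC, hfg⟩ := hg y hyC
  by_contra! hlt
  have := hf hgC (le_max_right M C) (hlt.trans_le (le_max_left M C))
  exact (hfg ▸ this).not_ge hyM

namespace Polynomial

theorem tendsto_eval_div_pow_natDegree (P : ℝ[X]) :
    Tendsto (fun y => P.eval y / y ^ P.natDegree) atTop (𝓝 P.leadingCoeff) := by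
  have hP := P.isEquivalent_atTop_lead.div (Asymptotics.IsEquivalent.refl (u := (· ^ P.natDegree)))
  refine hP.symm.tendsto_nhds (tendsto_const_nhds.congr' ?_)
  filter_upwards [eventually_gt_atTop 0] with y hy
  simp [mul_div_assoc, div_self (pow_pos hy _).ne']

theorem tendsto_eval_div_eval_rpow (F G : ℝ[X]) (hF : 0 < F.leadingCoeff) {p : ℝ}
    (hp : F.natDegree * p = G.natDegree) :
    Tendsto (fun y => G.eval y / F.eval y ^ p) atTop
      (𝓝 (G.leadingCoeff / F.leadingCoeff ^ p)) := by
  have hFlim := F.tendsto_eval_div_pow_natDegree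
  have hlim := G.tendsto_eval_div_pow_natDegree.div (hFlim.rpow_const (Or.inl hF.ne'))
    (Real.rpow_pos_of_pos hF p).ne'
  refine hlim.congr' ?_
  filter_upwards [eventually_gt_atTop 0, hFlim.eventually (lt_mem_nhds hF)] with y hy hFy
  have hyn := pow_pos hy F.natDegree
  have hpow : (y ^ F.natDegree) ^ p = y ^ G.natDegree := by
    rw [← Real.rpow_natCast, ← Real.rpow_mul hy.le, hp, Real.rpow_natCast]
  rw [Pi.div_apply, Real.div_rpow ((div_pos_iff_of_pos_right hyn).1 hFy).le hyn.le, hpow,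
    div_div_div_cancel_right₀ (pow_pos hy _).ne']

end Polynomial

theorem composed_inverse_poly_littleO_general (F G : Polynomial ℝ) (n m : ℕ)
    (hn : 1 ≤ n)
    (hdegF : F.natDegree = n) (hposF : 0 < F.leadingCoeff)
    (hdegG : G.natDegree = m)
    (C : ℝ) (hmono : StrictMonoOn F.eval (Set.Ici C))
    (Finv : ℝ → ℝ)
    (hright : ∀ y ∈ Set.Ici (F.eval C), Finv y ∈ Set.Ici C ∧ F.eval (Finv y) = y) :
    Tendsto
      (fun x : ℝ =>
        ((G.leadingCoeff / F.leadingCoeff ^ ((m : ℝ) / (n : ℝ))) * x ^ ((m : ℝ) / (n : ℝ)) -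
            G.eval (Finv x)) / x ^ ((m : ℝ) / (n : ℝ)))
      atTop (nhds 0) := by
  have hp : F.natDegree * ((m : ℝ) / n) = G.natDegree := by
    rw [hdegF, hdegG]
    field_simp [show (n : ℝ) ≠ 0 by positivity]
  have hlim := (tendsto_eval_div_eval_rpow F G hposF hp).comp
    (tendsto_atTop_of_strictMonoOn_of_rightInverse hmono hright)
  have hdiff := hlim.const_sub (G.leadingCoeff / F.leadingCoeff ^ ((m : ℝ) / n))
  rw [sub_self] at hdiff
  refine hdiff.congr' ?_
  filter_upwards [eventually_ge_atTop (F.eval C), eventually_gt_atTop 0] with x hxC hx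
  rw [Function.comp_apply, (hright x hxC).2, sub_div, mul_div_assoc,
    div_self (Real.rpow_pos_of_pos hx _).ne', mul_one]

/-- If `F` is a real polynomial of degree `n ≥ 1` with positive leading coefficient `aₙ`,
strictly increasing on `[C, ∞)` with inverse `Finv`, and `G` is a real polynomial of degree
`m ≥ 1` with leading coefficient `bₘ`, then
`(bₘ / aₙ^(m/n)) * x^(m/n) - G(Finv x) = o(x^(m/n))` as `x → ∞`, in the sense that the
quotient tends to `0`. -/
theorem composed_inverse_poly_littleO (F G : Polynomial ℝ) (n m : ℕ)
    (hn : 1 ≤ n) (hm : 1 ≤ m)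
    (hdegF : F.natDegree = n) (hposF : 0 < F.leadingCoeff)
    (hdegG : G.natDegree = m)
    (C : ℝ) (hmono : StrictMonoOn F.eval (Set.Ici C))
    (Finv : ℝ → ℝ)
    (hleft : ∀ x ∈ Set.Ici C, Finv (F.eval x) = x)
    (hright : ∀ y ∈ Set.Ici (F.eval C), Finv y ∈ Set.Ici C ∧ F.eval (Finv y) = y) :
    Tendsto
      (fun x : ℝ =>
        ((G.leadingCoeff / F.leadingCoeff ^ ((m : ℝ) / (n : ℝ))) * x ^ ((m : ℝ) / (n : ℝ)) -
            G.eval (Finv x)) / x ^ ((m : ℝ) / (n : ℝ)))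
      atTop (nhds 0) :=
  composed_inverse_poly_littleO_general F G n m hn hdegF hposF hdegG C hmono Finv hright
end

section
/- Let M be an ω-stable structure (all Morley ranks exist and are ordinals), X a definable set with Morley rank, Y a definable set of Morley rank ≥ S, and f : X → Y a definable surjection such that MR(f⁻¹(y)) ≥ R for every y ∈ Y, where R, S are natural numbers. Then MR(X) ≥ R + S. -/
/-!
Induct on `S`, proving more generally that `X ∩ f⁻¹(T)` has rank `≥ R + S` whenever `T` has
rank `≥ S` and every fibre over `T` has rank `≥ R`. A family `tᵢ` witnessing rank `≥ S + 1`
for `T` pulls back to the disjoint family `X ∩ f⁻¹(tᵢ)`. These sets are definable: they are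
projections of the graph of `f` cut down by `tᵢ`, and projecting away even infinitely many
coordinates preserves definability, since a formula mentions only finitely many variables.
-/

open FirstOrder Set

/-- `MRge L M r s` expresses that the Morley rank (computed in the structure `M`) of the
set `s` of tuples is at least `r`: every set has rank `≥ 0` iff it is nonempty, and rank
`≥ r + 1` iff it contains infinitely many pairwise disjoint definable subsets of rank
`≥ r`. -/
def MRge (L : FirstOrder.Language) (M : Type*) [L.Structure M] {α : Type*} :
    ℕ → Set (α → M) → Prop
  | 0, s => s.Nonempty
  | (r + 1), s =>
      ∃ t : ℕ → Set (α → M), (∀ i, (Set.univ : Set M).Definable L (t i)) ∧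
        (∀ i, t i ⊆ s) ∧ Pairwise (Function.onFun Disjoint t) ∧ ∀ i, MRge L M r (t i)

section

variable {L : FirstOrder.Language} {M : Type*} [L.Structure M] {α β : Type*}

theorem MRge.mono {r : ℕ} {s s' : Set (α → M)} (h : MRge L M r s) (hs : s ⊆ s') :
    MRge L M r s' := by
  cases r with
  | zero => exact Set.Nonempty.mono hs h
  | succ r =>
    obtain ⟨t, ht_def, ht_sub, ht_disj, ht_rank⟩ := h
    exact ⟨t, ht_def, fun i => (ht_sub i).trans hs, ht_disj, ht_rank⟩

theorem Set.Definable.exists_finset_preimage {A : Set M} {γ : Type*} {s : Set (γ → M)}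
    (hs : A.Definable L s) :
    ∃ (F : Finset γ) (s' : Set (F → M)), A.Definable L s' ∧
      s = (fun v : γ → M => v ∘ Subtype.val) ⁻¹' s' := by
  classical
  obtain ⟨φ, rfl⟩ := hs
  refine ⟨φ.freeVarFinset, {v | Language.Formula.Realize (φ.restrictFreeVar id) v}, ⟨_, rfl⟩,
    ?_⟩
  ext v
  exact (Language.BoundedFormula.realize_restrictFreeVar (φ := φ) (f := id)
    (v := v ∘ Subtype.val) v fun _ => rfl).symm

theorem Set.Definable.image_comp_sumInl {A : Set M} {s : Set (α ⊕ β → M)}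
    (hs : A.Definable L s) :
    A.Definable L ((fun v : α ⊕ β → M => v ∘ Sum.inl) '' s) := by
  classical
  -- `y₀` supplies values on the `β`-coordinates that the defining formula does not mention
  rcases isEmpty_or_nonempty (β → M) with hβ | ⟨⟨y₀⟩⟩
  · have : IsEmpty (α ⊕ β → M) := ⟨fun v => hβ.false (v ∘ Sum.inr)⟩
    rw [s.eq_empty_of_isEmpty, image_empty]
    exact definable_empty
  obtain ⟨F, s', hs', rfl⟩ := hs.exists_finset_preimage
  let g : F → α ⊕ {b : β // Sum.inr b ∈ F}
    | ⟨.inl a, _⟩ => .inl a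
    | ⟨.inr b, hb⟩ => .inr ⟨b, hb⟩
  have hg (x : α → M) (y : β → M) :
      Sum.elim x y ∘ Subtype.val = Sum.elim x (y ∘ Subtype.val) ∘ g := by
    funext ⟨c, hc⟩
    cases c <;> rfl
  have : Finite {b : β // Sum.inr b ∈ F} :=
    (F.finite_toSet.preimage Sum.inr_injective.injOn).to_subtype
  convert (hs'.preimage_comp g).exists_of_finite using 1
  ext x
  simp only [mem_image, mem_preimage, mem_ofPred_eq]
  constructor
  · rintro ⟨v, hv, rfl⟩
    refine ⟨(v ∘ Sum.inr) ∘ Subtype.val, ?_⟩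
    rwa [← hg, Sum.elim_comp_inl_inr]
  · rintro ⟨z, hz⟩
    let y : β → M := fun b => if h : Sum.inr b ∈ F then z ⟨b, h⟩ else y₀ b
    have hyz : y ∘ Subtype.val = z := funext fun b => dif_pos b.2
    exact ⟨Sum.elim x y, by rwa [hg, hyz], Sum.elim_comp_inl x y⟩

def tupleGraphOn (X : Set (α → M)) (f : (α → M) → (β → M)) : Set (α ⊕ β → M) :=
  {p | p ∘ Sum.inl ∈ X ∧ f (p ∘ Sum.inl) = p ∘ Sum.inr}

theorem tupleGraphOn_inter_preimage_comp_sumInr (X : Set (α → M)) (f : (α → M) → (β → M))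
    (t : Set (β → M)) :
    (fun v : α ⊕ β → M => v ∘ Sum.inl) ''
        (tupleGraphOn X f ∩ (fun v : α ⊕ β → M => v ∘ Sum.inr) ⁻¹' t) =
      X ∩ f ⁻¹' t := by
  ext x
  constructor
  · rintro ⟨p, ⟨⟨hpX, hpf⟩, hpt⟩, rfl⟩
    exact ⟨hpX, by rw [mem_preimage, hpf]; exact hpt⟩
  · rintro ⟨hxX, hxt⟩
    exact ⟨Sum.elim x (f x), ⟨⟨hxX, rfl⟩, hxt⟩, Sum.elim_comp_inl x (f x)⟩

theorem Set.Definable.inter_preimage {A : Set M} {X : Set (α → M)} {f : (α → M) → (β → M)}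
    {t : Set (β → M)} (hgraph : A.Definable L (tupleGraphOn X f)) (ht : A.Definable L t) :
    A.Definable L (X ∩ f ⁻¹' t) :=
  tupleGraphOn_inter_preimage_comp_sumInr X f t ▸
    (hgraph.inter (ht.preimage_comp Sum.inr)).image_comp_sumInl

theorem MRge.add_inter_preimage {X : Set (α → M)} {f : (α → M) → (β → M)}
    (hgraph : (univ : Set M).Definable L (tupleGraphOn X f)) {R S : ℕ} {T : Set (β → M)}
    (hT : MRge L M S T) (hfib : ∀ y ∈ T, MRge L M R (X ∩ f ⁻¹' {y})) :
    MRge L M (R + S) (X ∩ f ⁻¹' T) := by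
  induction S generalizing T with
  | zero =>
    obtain ⟨y, hy⟩ := hT
    exact (hfib y hy).mono
      (inter_subset_inter_right X (preimage_mono (singleton_subset_iff.2 hy)))
  | succ S ih =>
    obtain ⟨t, ht_def, ht_sub, ht_disj, ht_rank⟩ := hT
    exact ⟨fun i => X ∩ f ⁻¹' t i, fun i => hgraph.inter_preimage (ht_def i),
      fun i => inter_subset_inter_right X (preimage_mono (ht_sub i)),
      fun _ _ hij => ((ht_disj hij).preimage f).mono inter_subset_right inter_subset_right,
      fun i => ih (ht_rank i) fun y hy => hfib y (ht_sub i hy)⟩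

end

theorem MRge_add_of_definable_surjection_general (L : FirstOrder.Language) (M : Type*)
    [L.Structure M] {α β : Type*}
    (X : Set (α → M)) (Y : Set (β → M)) (f : (α → M) → (β → M))
    (hgraph : (Set.univ : Set M).Definable L
      {p : α ⊕ β → M | (fun a => p (Sum.inl a)) ∈ X ∧
        f (fun a => p (Sum.inl a)) = fun b => p (Sum.inr b)})
    (R S : ℕ)
    (hfib : ∀ y ∈ Y, MRge L M R (X ∩ f ⁻¹' {y}))
    (hrankY : MRge L M S Y) :
    MRge L M (R + S) X :=
  (MRge.add_inter_preimage (X := X) hgraph hrankY hfib).mono inter_subset_left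

/-- If `f` is a definable surjection from `X` onto `Y`, all fibers have Morley rank `≥ R`,
and `Y` has Morley rank `≥ S`, then `X` has Morley rank `≥ R + S`.  (Part 1 of the
fiber-rank lemma; the sets `X`, `Y` and the graph of `f` are definable with parameters.) -/
theorem MRge_add_of_definable_surjection (L : FirstOrder.Language) (M : Type*)
    [L.Structure M] {α β : Type*}
    (X : Set (α → M)) (Y : Set (β → M)) (f : (α → M) → (β → M))
    (hX : (Set.univ : Set M).Definable L X)
    (hY : (Set.univ : Set M).Definable L Y)
    (hgraph : (Set.univ : Set M).Definable L
      {p : α ⊕ β → M | (fun a => p (Sum.inl a)) ∈ X ∧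
        f (fun a => p (Sum.inl a)) = fun b => p (Sum.inr b)})
    (hmaps : ∀ x ∈ X, f x ∈ Y)
    (hsurj : ∀ y ∈ Y, ∃ x ∈ X, f x = y)
    (R S : ℕ)
    (hfib : ∀ y ∈ Y, MRge L M R (X ∩ f ⁻¹' {y}))
    (hrankY : MRge L M S Y) :
    MRge L M (R + S) X :=
  MRge_add_of_definable_surjection_general L M X Y f hgraph R S hfib hrankY
end
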